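/- arXiv:1604.02043 — 2 statements merged into one kernel-verified Lean document; each statement's English description precedes it below -/
import Mathlib

section
/- Let D ≥ 4 be a natural number. Consider combinatorial data encoding a graph as in the graph complex GC_M^{≥3}: natural numbers V ≥ 1 (number of vertices) and E (number of edges), a valence function val : Fin V → ℕ satisfying the handshake identity ∑_v val(v) = 2·E, and functions numdec, decdeg : Fin V → ℕ (number of decorations at each vertex and their total degree) such that every vertex satisfies the trivalence condition val(v) + numdec(v) ≥ 3 and the decoration bound decdeg(v) ≥ 2·numdec(v) (every decoration has degree at least 2, as happens when H^1(M;ℝ) = 0 for a connected closed D-manifold M). If E ≥ V (for a connected graph: the graph is not a tree), then (D−1)·E + ∑_v decdeg(v) > D·V; i.e., the cohomological degree (D−1)·E − D·V + ∑_v decdeg(v) is strictly positive. Equivalently, every such graph of degree zero satisfies E < V, so every connected degree-zero graph in GC_M^{≥3} is a tree. -/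
/-- Degree counting in the graph complex `GC_M^{≥3}` for `D ≥ 4` and `H^1(M;ℝ) = 0`:
a graph with at least one vertex, handshake identity `∑ val = 2E`, every vertex at least
trivalent counting decorations, every decoration of degree at least 2, and `E ≥ V`
(i.e. a connected non-tree) has strictly positive cohomological degree
`(D−1)·E − D·V + ∑ decdeg`. Hence every connected degree-zero graph is a tree. -/
theorem degree_zero_graphs_are_trees
    (D V E : ℕ) (hD : 4 ≤ D) (hV : 1 ≤ V)
    (val numdec decdeg : Fin V → ℕ)
    (handshake : ∑ v, val v = 2 * E)
    (trivalent : ∀ v, 3 ≤ val v + numdec v)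
    (decbound : ∀ v, 2 * numdec v ≤ decdeg v)
    (nontree : V ≤ E) :
    D * V < (D - 1) * E + ∑ v, decdeg v := by
  have key : ∀ v, 9 ≤ 3 * val v + 2 * decdeg v := fun v => by
    have h1 := trivalent v; have h2 := decbound v; omega
  have hsum : ∑ v, (3 * val v + 2 * decdeg v) = 6 * E + 2 * ∑ v, decdeg v := by
    rw [Finset.sum_add_distrib, ← Finset.mul_sum, ← Finset.mul_sum, handshake]; ring
  have h9 : 9 * V ≤ 6 * E + 2 * ∑ v, decdeg v := by
    calc 9 * V = ∑ _v : Fin V, 9 := by simp [Finset.sum_const, mul_comm]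
    _ ≤ ∑ v, (3 * val v + 2 * decdeg v) := Finset.sum_le_sum fun v _ => key v
    _ = 6 * E + 2 * ∑ v, decdeg v := hsum
  obtain ⟨c, rfl⟩ := Nat.exists_eq_add_of_le hD
  have hD1 : 4 + c - 1 = 3 + c := by omega
  rw [hD1]
  have hcv : c * V ≤ c * E := Nat.mul_le_mul_left c nontree
  nlinarith [h9, hV, nontree, hcv]
end

section
/- Let D ≥ 4 be a natural number. Consider combinatorial data encoding a graph as in the graph complex GC_M^{≥3}, now allowing decorations of degree 1 (the case H^1(M;ℝ) ≠ 0): natural numbers V ≥ 1 and E, a valence function val : Fin V → ℕ satisfying the handshake identity ∑_v val(v) = 2·E, and functions numdec, decdeg : Fin V → ℕ such that every vertex satisfies the trivalence condition val(v) + numdec(v) ≥ 3 and the decoration bound decdeg(v) ≥ numdec(v) (every decoration has degree at least 1). Suppose E ≥ V (for a connected graph: the graph contains a cycle) and the cohomological degree vanishes, i.e. (D−1)·E + ∑_v decdeg(v) = D·V. Then E = V (the graph has exactly one independent cycle, i.e. genus 1), and every vertex satisfies decdeg(v) + val(v) = 3 and decdeg(v) = numdec(v); in particular all decorations have degree exactly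 1 and every vertex is exactly trivalent counting decorations. -/
lemma aux_sum_eq_three {n : ℕ} (f : Fin n → ℕ) (h : ∀ v, 3 ≤ f v)
    (hs : ∑ v, f v = 3 * n) : ∀ v, f v = 3 := by
  intro v
  by_contra hne
  have h4 : 4 ≤ f v := by have := h v; omega
  have hsplit : f v + ∑ w ∈ Finset.univ.erase v, f w = ∑ w, f w :=
    Finset.add_sum_erase _ f (Finset.mem_univ v)
  have hle : ∑ _w ∈ Finset.univ.erase v, 3 ≤ ∑ w ∈ Finset.univ.erase v, f w :=
    Finset.sum_le_sum (fun w _ => h w)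
  have hcard : (Finset.univ.erase v).card = n - 1 := by
    simp [Finset.card_erase_of_mem]
  have hconst : ∑ _w ∈ Finset.univ.erase v, 3 = 3 * (n - 1) := by
    rw [Finset.sum_const, hcard]; ring
  have hn : 1 ≤ n := v.pos
  omega

/-- Degree counting in the graph complex `GC_M^{≥3}` for `D ≥ 4`, allowing decorations of
degree 1 (the case `H^1(M;ℝ) ≠ 0`): a graph with at least one vertex, handshake identity
`∑ val = 2E`, every vertex at least trivalent counting decorations, every decoration of
degree at least 1, containing a cycle (`E ≥ V`), and of vanishing cohomological degree
`(D−1)·E + ∑ decdeg = D·V` has genus exactly one (`E = V`), and every vertex satisfies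
`decdeg v + val v = 3` and `decdeg v = numdec v`: all decorations have degree exactly 1
and every vertex is exactly trivalent counting decorations. -/
theorem degree_zero_nontree_graphs_genus_one
    (D V E : ℕ) (hD : 4 ≤ D) (hV : 1 ≤ V)
    (val numdec decdeg : Fin V → ℕ)
    (handshake : ∑ v, val v = 2 * E)
    (trivalent : ∀ v, 3 ≤ val v + numdec v)
    (decbound : ∀ v, numdec v ≤ decdeg v)
    (nontree : V ≤ E)
    (degzero : (D - 1) * E + ∑ v, decdeg v = D * V) :
    E = V ∧ ∀ v, decdeg v + val v = 3 ∧ decdeg v = numdec v := by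
  set S := ∑ v, decdeg v with hS
  -- 3V ≤ 2E + S
  have h1 : ∑ _v : Fin V, 3 ≤ ∑ v, (val v + decdeg v) :=
    Finset.sum_le_sum (fun v _ => by have := trivalent v; have := decbound v; omega)
  have hsum : ∑ v, (val v + decdeg v) = 2 * E + S := by
    rw [Finset.sum_add_distrib, handshake]
  have hconst : ∑ _v : Fin V, 3 = 3 * V := by
    rw [Finset.sum_const, Finset.card_univ, Fintype.card_fin]; ring
  have key : 3 * V ≤ 2 * E + S := by rw [← hsum, ← hconst]; exact h1
  -- rewrite degzero multiplications
  have hDm1 : (D - 1) * E = (D - 3) * E + 2 * E := by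
    have : D - 1 = (D - 3) + 2 := by omega
    rw [this]; ring
  have hDV : D * V = (D - 3) * V + 3 * V := by
    have : D = (D - 3) + 3 := by omega
    nth_rewrite 1 [this]; ring
  have hEle : (D - 3) * E ≤ (D - 3) * V := by omega
  have hEV : E = V := by
    have hk : 0 < D - 3 := by omega
    have := Nat.le_of_mul_le_mul_left hEle hk
    omega
  have heq : (D - 3) * E = (D - 3) * V := by rw [hEV]
  have hSV : S = V := by omega
  have hall : ∀ v, decdeg v + val v = 3 := by
    have hs3 : ∑ v, (decdeg v + val v) = 3 * V := by
      rw [Finset.sum_add_distrib, handshake, ← hS]; omega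
    exact aux_sum_eq_three _ (fun v => by have := trivalent v; have := decbound v; omega) hs3
  exact ⟨hEV, fun v => ⟨hall v, by have := hall v; have := trivalent v; have := decbound v; omega⟩⟩
end
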